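/- With notation as above (three-state 1-D Ising model, π the normalized Gibbs measure, i an interior site), one has ∑_{x : x_i = c⁽¹⁾} π(x) = 1/3, and moreover ∑_{x ∈ W^(1)} π(x) = 1/(3(1 + 2·exp(-2/T))), while ∑_{x ∈ W^(2)} π(x) = ∑_{x ∈ W^(3)} π(x) = exp(-2/T)/(3(1 + 2·exp(-2/T))). -/
import Mathlib


open Finset

/-- Unnormalized Gibbs weight of the 1-D Ising model with `N` colors on `n` sites:
`w(x) = exp((1/T) ∑_{k=1}^{n-1} (𝟙{x_k = x_{k+1}} - 𝟙{x_k ≠ x_{k+1}}))`. -/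
noncomputable def isingW (N n : ℕ) (T : ℝ) (x : Fin n → Fin N) : ℝ :=
  Real.exp (1 / T * ∑ k : Fin (n - 1),
    (if x ⟨k.1, by have := k.2; omega⟩ = x ⟨k.1 + 1, by have := k.2; omega⟩
      then (1 : ℝ) else -1))

/-- Partition function of the 1-D Ising model. -/
noncomputable def isingZ (N n : ℕ) (T : ℝ) : ℝ :=
  ∑ x : Fin n → Fin N, isingW N n T x

/-- Normalized Gibbs measure of the 1-D Ising model. -/
noncomputable def isingPi (N n : ℕ) (T : ℝ) (x : Fin n → Fin N) : ℝ :=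
  isingW N n T x / isingZ N n T

set_option maxHeartbeats 1000000

section aux
variable (n : ℕ) (T : ℝ)

lemma isingW_pos (x : Fin n → Fin 3) : 0 < isingW 3 n T x := Real.exp_pos _

lemma isingW_comp (σ : Fin 3 ≃ Fin 3) (x : Fin n → Fin 3) :
    isingW 3 n T (σ ∘ x) = isingW 3 n T x := by
  unfold isingW
  congr 1
  congr 1
  exact Finset.sum_congr rfl fun k _ => by simp [Function.comp]

lemma sum_site (i : ℕ) (hiN : i < n) (σ : Fin 3 ≃ Fin 3) (c : Fin 3) :
    ∑ x ∈ univ.filter (fun x : Fin n → Fin 3 => x ⟨i, hiN⟩ = c), isingW 3 n T x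
      = ∑ x ∈ univ.filter (fun x : Fin n → Fin 3 => x ⟨i, hiN⟩ = σ c),
          isingW 3 n T x := by
  refine Finset.sum_nbij' (fun x => σ ∘ x) (fun x => σ.symm ∘ x) ?_ ?_ ?_ ?_ ?_
  · intro a ha; simp only [mem_filter, mem_univ, true_and, Function.comp] at *
    rw [ha]
  · intro a ha; simp only [mem_filter, mem_univ, true_and, Function.comp,
      Equiv.symm_apply_eq] at *
    exact ha
  · intro a _; funext k; simp
  · intro a _; funext k; simp
  · intro a _; exact (isingW_comp n T σ a).symm

lemma sum_pair (i : ℕ) (hiN : i < n) (hi1N : i + 1 < n) (σ : Fin 3 ≃ Fin 3)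
    (a b : Fin 3) :
    ∑ x ∈ univ.filter (fun x : Fin n → Fin 3 =>
        x ⟨i, hiN⟩ = a ∧ x ⟨i + 1, hi1N⟩ = b), isingW 3 n T x
      = ∑ x ∈ univ.filter (fun x : Fin n → Fin 3 =>
          x ⟨i, hiN⟩ = σ a ∧ x ⟨i + 1, hi1N⟩ = σ b), isingW 3 n T x := by
  refine Finset.sum_nbij' (fun x => σ ∘ x) (fun x => σ.symm ∘ x) ?_ ?_ ?_ ?_ ?_
  · intro y hy; simp only [mem_filter, mem_univ, true_and, Function.comp] at *
    rw [hy.1, hy.2]; exact ⟨rfl, rfl⟩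
  · intro y hy; simp only [mem_filter, mem_univ, true_and, Function.comp,
      Equiv.symm_apply_eq] at *
    exact hy
  · intro y _; funext k; simp
  · intro y _; funext k; simp
  · intro y _; exact (isingW_comp n T σ y).symm

/-- swap colours `c₁, c₂` on all sites `≥ i+1`. -/
def tswap (i : ℕ) (c₁ c₂ : Fin 3) (x : Fin n → Fin 3) : Fin n → Fin 3 :=
  fun k => if i + 1 ≤ k.1 then Equiv.swap c₁ c₂ (x k) else x k

lemma tswap_tswap (i : ℕ) (c₁ c₂ : Fin 3) (x : Fin n → Fin 3) :
    tswap n i c₁ c₂ (tswap n i c₁ c₂ x) = x := by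
  funext k
  by_cases h : i + 1 ≤ k.1 <;> simp [tswap, h, Equiv.swap_apply_self]

lemma isingW_tswap (c₁ c₂ : Fin 3) (hcc : c₁ ≠ c₂) (i : ℕ) (hin : i < n - 1)
    (x : Fin n → Fin 3) (h1 : x ⟨i, by omega⟩ = c₁) (h2 : x ⟨i + 1, by omega⟩ = c₂) :
    isingW 3 n T (tswap n i c₁ c₂ x) = Real.exp (2 / T) * isingW 3 n T x := by
  unfold isingW
  rw [← Real.exp_add]
  congr 1
  have hsum : (∑ k : Fin (n - 1),
      (if tswap n i c₁ c₂ x ⟨k.1, by have := k.2; omega⟩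
          = tswap n i c₁ c₂ x ⟨k.1 + 1, by have := k.2; omega⟩ then (1 : ℝ) else -1))
      = ∑ k : Fin (n - 1),
        ((if x ⟨k.1, by have := k.2; omega⟩ = x ⟨k.1 + 1, by have := k.2; omega⟩
            then (1 : ℝ) else -1)
          + (if k = (⟨i, hin⟩ : Fin (n - 1)) then 2 else 0)) := by
    refine Finset.sum_congr rfl fun k _ => ?_
    by_cases h : k.1 < i
    · have hk1 : ¬ (i + 1 ≤ k.1) := by omega
      have hk2 : ¬ (i + 1 ≤ k.1 + 1) := by omega
      have hk3 : k ≠ (⟨i, hin⟩ : Fin (n - 1)) := by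
        simp only [ne_eq, Fin.ext_iff]; omega
      simp [tswap, hk1, hk2, hk3]
    · by_cases h' : k.1 = i
      · have hk1 : ¬ (i + 1 ≤ k.1) := by omega
        have hk2 : i + 1 ≤ k.1 + 1 := by omega
        have hk3 : k = (⟨i, hin⟩ : Fin (n - 1)) := by
          simp only [Fin.ext_iff]; omega
        simp [tswap, hk1, hk2, hk3, h1, h2, Equiv.swap_apply_right, hcc]
        norm_num
      · have hk1 : i + 1 ≤ k.1 := by omega
        have hk2 : i + 1 ≤ k.1 + 1 := by omega
        have hk3 : k ≠ (⟨i, hin⟩ : Fin (n - 1)) := by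
          simp only [ne_eq, Fin.ext_iff]; omega
        simp [tswap, hk1, hk2, hk3]
  rw [hsum, Finset.sum_add_distrib]
  simp
  ring

end aux

lemma main_aux (n : ℕ) (hn : 3 ≤ n) (T : ℝ) (hT : 0 < T)
    (c₁ c₂ c₃ : Fin 3) (hc12 : c₁ ≠ c₂) (hc13 : c₁ ≠ c₃) (hc23 : c₂ ≠ c₃)
    (i : ℕ) (hi1 : 1 ≤ i) (hi2 : i ≤ n - 2) (hiN : i < n) (hi1N : i + 1 < n) :
    (∑ x ∈ Finset.univ.filter (fun x : Fin n → Fin 3 =>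
        x ⟨i, hiN⟩ = c₁), isingPi 3 n T x) = 1 / 3 ∧
    (∑ x ∈ Finset.univ.filter (fun x : Fin n → Fin 3 =>
        x ⟨i, hiN⟩ = c₁ ∧ x ⟨i + 1, hi1N⟩ = c₁), isingPi 3 n T x)
      = 1 / (3 * (1 + 2 * Real.exp (-2 / T))) ∧
    (∑ x ∈ Finset.univ.filter (fun x : Fin n → Fin 3 =>
        x ⟨i, hiN⟩ = c₁ ∧ x ⟨i + 1, hi1N⟩ = c₂), isingPi 3 n T x)
      = Real.exp (-2 / T) / (3 * (1 + 2 * Real.exp (-2 / T))) ∧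
    (∑ x ∈ Finset.univ.filter (fun x : Fin n → Fin 3 =>
        x ⟨i, hiN⟩ = c₁ ∧ x ⟨i + 1, hi1N⟩ = c₃), isingPi 3 n T x)
      = Real.exp (-2 / T) / (3 * (1 + 2 * Real.exp (-2 / T))) := by
  have hT' : T ≠ 0 := ne_of_gt hT
  have hin : i < n - 1 := by omega
  set E := Real.exp (2 / T) with hE
  have hEpos : 0 < E := Real.exp_pos _
  set A := ∑ x ∈ univ.filter (fun x : Fin n → Fin 3 =>
      x ⟨i, hiN⟩ = c₁ ∧ x ⟨i + 1, hi1N⟩ = c₁), isingW 3 n T x with hAdef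
  set B := ∑ x ∈ univ.filter (fun x : Fin n → Fin 3 =>
      x ⟨i, hiN⟩ = c₁ ∧ x ⟨i + 1, hi1N⟩ = c₂), isingW 3 n T x with hBdef
  set C := ∑ x ∈ univ.filter (fun x : Fin n → Fin 3 =>
      x ⟨i, hiN⟩ = c₁ ∧ x ⟨i + 1, hi1N⟩ = c₃), isingW 3 n T x with hCdef
  set S := ∑ x ∈ univ.filter (fun x : Fin n → Fin 3 => x ⟨i, hiN⟩ = c₁),
      isingW 3 n T x with hSdef
  have hBC : B = C := by
    have h := sum_pair n T i hiN hi1N (Equiv.swap c₂ c₃) c₁ c₂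
    rw [Equiv.swap_apply_left, Equiv.swap_apply_of_ne_of_ne hc12 hc13] at h
    exact h
  have hii : ¬ (i + 1 ≤ i) := by omega
  have hA : A = E * B := by
    rw [hBdef, Finset.mul_sum, hAdef]
    refine (Finset.sum_nbij' (tswap n i c₁ c₂) (tswap n i c₁ c₂) ?_ ?_ ?_ ?_ ?_).symm
    · intro a ha
      simp only [mem_filter, mem_univ, true_and] at ha ⊢
      obtain ⟨ha1, ha2⟩ := ha
      constructor
      · show tswap n i c₁ c₂ a ⟨i, hiN⟩ = c₁
        simp [tswap, hii, ha1]
      · show tswap n i c₁ c₂ a ⟨i + 1, hi1N⟩ = c₁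
        simp [tswap, ha2, Equiv.swap_apply_right]
    · intro a ha
      simp only [mem_filter, mem_univ, true_and] at ha ⊢
      obtain ⟨ha1, ha2⟩ := ha
      constructor
      · show tswap n i c₁ c₂ a ⟨i, hiN⟩ = c₁
        simp [tswap, hii, ha1]
      · show tswap n i c₁ c₂ a ⟨i + 1, hi1N⟩ = c₂
        simp [tswap, ha2, Equiv.swap_apply_left]
    · intro a _; exact tswap_tswap n i c₁ c₂ a
    · intro a _; exact tswap_tswap n i c₁ c₂ a
    · intro a ha
      simp only [mem_filter, mem_univ, true_and] at ha
      exact (isingW_tswap n T c₁ c₂ hc12 i hin a ha.1 ha.2).symm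
  have huniv : (univ : Finset (Fin 3)) = {c₁, c₂, c₃} := by
    symm
    apply Finset.eq_univ_of_card
    rw [Finset.card_insert_of_notMem (by simp [hc12, hc13]),
        Finset.card_insert_of_notMem (by simp [hc23]), Finset.card_singleton]
    simp
  have hSsum : S = A + (B + C) := by
    have hfib := Finset.sum_fiberwise
      (univ.filter (fun x : Fin n → Fin 3 => x ⟨i, hiN⟩ = c₁))
      (fun x => x ⟨i + 1, hi1N⟩) (isingW 3 n T)
    rw [huniv, Finset.sum_insert (by simp [hc12, hc13]),
        Finset.sum_insert (by simp [hc23]), Finset.sum_singleton] at hfib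
    simp only [Finset.filter_filter] at hfib
    exact hfib.symm
  have hSS : ∀ c : Fin 3,
      (∑ x ∈ univ.filter (fun x : Fin n → Fin 3 => x ⟨i, hiN⟩ = c),
        isingW 3 n T x) = S := by
    intro c
    have h := sum_site n T i hiN (Equiv.swap c c₁) c
    rw [Equiv.swap_apply_left] at h
    exact h
  have hZ : isingZ 3 n T = 3 * S := by
    have hfib := Finset.sum_fiberwise (univ : Finset (Fin n → Fin 3))
      (fun x => x ⟨i, hiN⟩) (isingW 3 n T)
    unfold isingZ
    rw [← hfib, Finset.sum_congr rfl (fun c _ => hSS c), Finset.sum_const,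
        Finset.card_univ]
    simp
  have hBpos : 0 < B := by
    rw [hBdef]
    apply Finset.sum_pos (fun x _ => isingW_pos n T x)
    refine ⟨fun k => if k.1 = i + 1 then c₂ else c₁, ?_⟩
    have h1 : ¬ (i = i + 1) := by omega
    simp only [mem_filter, mem_univ, true_and]
    constructor
    · simp [h1]
    · simp
  have hSpos : 0 < S := by
    have h1 : 0 < E * B := mul_pos hEpos hBpos
    rw [hSsum, hA, ← hBC]; linarith
  have hZpos : 0 < isingZ 3 n T := by rw [hZ]; linarith
  have hZne : isingZ 3 n T ≠ 0 := ne_of_gt hZpos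
  have hEinv : Real.exp (-2 / T) = E⁻¹ := by
    rw [neg_div, Real.exp_neg, hE]
  have hB0 : B ≠ 0 := ne_of_gt hBpos
  have hE0 : E ≠ 0 := ne_of_gt hEpos
  have hS0 : S ≠ 0 := ne_of_gt hSpos
  simp only [isingPi, ← Finset.sum_div]
  refine ⟨?_, ?_, ?_, ?_⟩
  · rw [← hSdef, hZ]
    field_simp
  · rw [← hAdef, hZ, hEinv, hSsum, hA, ← hBC]
    field_simp
    ring
  · rw [← hBdef, hZ, hEinv, hSsum, hA, ← hBC]
    field_simp
    ring
  · rw [← hCdef, hZ, hEinv, hSsum, hA, ← hBC]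
    field_simp
    ring

/-- For the three-state 1-D Ising model with normalized Gibbs measure `π` and an
interior site `i`: `∑_{x : x_i = c⁽¹⁾} π(x) = 1/3`,
`∑_{x ∈ W^(1)} π(x) = 1/(3(1+2e^{-2/T}))`, and
`∑_{x ∈ W^(2)} π(x) = ∑_{x ∈ W^(3)} π(x) = e^{-2/T}/(3(1+2e^{-2/T}))`. -/
theorem sum_pi_W_three_state (n : ℕ) (hn : 3 ≤ n) (T : ℝ) (hT : 0 < T)
    (c₁ c₂ c₃ : Fin 3) (hc : c₁ ≠ c₂ ∧ c₁ ≠ c₃ ∧ c₂ ≠ c₃)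
    (i : ℕ) (hi1 : 1 ≤ i) (hi2 : i ≤ n - 2) :
    (∑ x ∈ Finset.univ.filter (fun x : Fin n → Fin 3 =>
        x ⟨i, by omega⟩ = c₁), isingPi 3 n T x) = 1 / 3 ∧
    (∑ x ∈ Finset.univ.filter (fun x : Fin n → Fin 3 =>
        x ⟨i, by omega⟩ = c₁ ∧ x ⟨i + 1, by omega⟩ = c₁), isingPi 3 n T x)
      = 1 / (3 * (1 + 2 * Real.exp (-2 / T))) ∧
    (∑ x ∈ Finset.univ.filter (fun x : Fin n → Fin 3 =>
        x ⟨i, by omega⟩ = c₁ ∧ x ⟨i + 1, by omega⟩ = c₂), isingPi 3 n T x)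
      = Real.exp (-2 / T) / (3 * (1 + 2 * Real.exp (-2 / T))) ∧
    (∑ x ∈ Finset.univ.filter (fun x : Fin n → Fin 3 =>
        x ⟨i, by omega⟩ = c₁ ∧ x ⟨i + 1, by omega⟩ = c₃), isingPi 3 n T x)
      = Real.exp (-2 / T) / (3 * (1 + 2 * Real.exp (-2 / T))) := by
  exact main_aux n hn T hT c₁ c₂ c₃ hc.1 hc.2.1 hc.2.2 i hi1 hi2
    (by omega) (by omega)
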